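/- Let K* > 0 and let Γ be the quotient of the closed set Ī = closure{x ∈ ℝ² : H(x) < (K*)ⁿ} (with H(x) = (max{0,‖x‖−1})ⁿ, n > 2) under the equivalence identifying: each point of the open unit disc with itself only, all points of the unit circle together into one class, and all points of each circle {‖x‖ = 1 + h^{1/n}} (0 < h ≤ (K*)ⁿ) into one class. Then Γ, with the quotient topology, is homeomorphic to the subspace S² ∪ ({0}×{0}×[1, (K*)ⁿ + 1]) of ℝ³, where S² is the unit sphere. -/

import Mathlib

/-- The flattened Hamiltonian `H(x) = (max {0, ‖x‖ - 1})^n`. -/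
noncomputable def Hflat (n : ℕ) (x : EuclideanSpace ℝ (Fin 2)) : ℝ :=
  (max 0 (‖x‖ - 1)) ^ n

/-- `Ī`, the closure of the sublevel set `{H < (K*)ⁿ}`. -/
def Ibar (n : ℕ) (Kstar : ℝ) : Set (EuclideanSpace ℝ (Fin 2)) :=
  closure {x | Hflat n x < Kstar ^ n}

/-- The identification: points of the open unit disc are only equivalent to themselves;
two points of norm `≥ 1` are equivalent iff they have equal norms (so each circle
`‖x‖ = 1 + h^{1/n}` with `h ≥ 0`, in particular the unit circle, is one class). -/
def rel (n : ℕ) (Kstar : ℝ) (x y : Ibar n Kstar) : Prop :=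
  (‖(x : EuclideanSpace ℝ (Fin 2))‖ < 1 ∧ x = y) ∨
  (1 ≤ ‖(x : EuclideanSpace ℝ (Fin 2))‖ ∧ 1 ≤ ‖(y : EuclideanSpace ℝ (Fin 2))‖ ∧
    ‖(x : EuclideanSpace ℝ (Fin 2))‖ = ‖(y : EuclideanSpace ℝ (Fin 2))‖)

/-! ### Auxiliary constructions -/

noncomputable def mk3 (a b c : ℝ) : EuclideanSpace ℝ (Fin 3) :=
  (EuclideanSpace.equiv (Fin 3) ℝ).symm ![a, b, c]

noncomputable def mk2 (a b : ℝ) : EuclideanSpace ℝ (Fin 2) :=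
  (EuclideanSpace.equiv (Fin 2) ℝ).symm ![a, b]

@[simp] lemma mk3_apply0 (a b c : ℝ) : mk3 a b c 0 = a := rfl
@[simp] lemma mk3_apply1 (a b c : ℝ) : mk3 a b c 1 = b := rfl
@[simp] lemma mk3_apply2 (a b c : ℝ) : mk3 a b c 2 = c := rfl
@[simp] lemma mk2_apply0 (a b : ℝ) : mk2 a b 0 = a := rfl
@[simp] lemma mk2_apply1 (a b : ℝ) : mk2 a b 1 = b := rfl

lemma Dpos (r : ℝ) : 0 < 2*r^2 - 2*r + 1 := by nlinarith [sq_nonneg (2*r-1)]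

lemma normsq2 (x : EuclideanSpace ℝ (Fin 2)) : x 0 ^ 2 + x 1 ^ 2 = ‖x‖ ^ 2 := by
  have h : ‖x‖ = Real.sqrt (x 0 ^ 2 + x 1 ^ 2) := by
    rw [EuclideanSpace.norm_eq]
    simp [Fin.sum_univ_two, sq_abs]
  rw [h, Real.sq_sqrt (by positivity)]

lemma normsq3 (x : EuclideanSpace ℝ (Fin 3)) : x 0 ^ 2 + x 1 ^ 2 + x 2 ^ 2 = ‖x‖ ^ 2 := by
  have h : ‖x‖ = Real.sqrt (x 0 ^ 2 + x 1 ^ 2 + x 2 ^ 2) := by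
    rw [EuclideanSpace.norm_eq]
    simp [Fin.sum_univ_three, sq_abs]
  rw [h, Real.sq_sqrt (by positivity)]

lemma norm_eq_of_sq2 (x : EuclideanSpace ℝ (Fin 2)) (a : ℝ) (ha : 0 ≤ a)
    (h : x 0 ^ 2 + x 1 ^ 2 = a ^ 2) : ‖x‖ = a := by
  have h2 := normsq2 x
  have hn := norm_nonneg x
  nlinarith [sq_nonneg (‖x‖ - a), sq_nonneg (‖x‖ + a)]

lemma pow_inj_nonneg (n : ℕ) (hn : n ≠ 0) {a b : ℝ} (ha : 0 ≤ a) (hb : 0 ≤ b)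
    (h : a ^ n = b ^ n) : a = b := by
  rcases lt_trichotomy a b with h' | h' | h'
  · exact absurd h (pow_lt_pow_left₀ h' ha hn).ne
  · exact h'
  · exact absurd h.symm (pow_lt_pow_left₀ h' hb hn).ne

/-- The map from the plane onto the unit sphere collapsing `{‖x‖ ≥ 1}` to the north pole
on the disc `{‖x‖ ≤ 1}`. -/
noncomputable def sph (x : EuclideanSpace ℝ (Fin 2)) : EuclideanSpace ℝ (Fin 3) :=
  mk3 (2*(1-‖x‖)*(x 0)/(2*‖x‖^2-2*‖x‖+1))
      (2*(1-‖x‖)*(x 1)/(2*‖x‖^2-2*‖x‖+1))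
      ((2*‖x‖-1)/(2*‖x‖^2-2*‖x‖+1))

lemma norm_sph (x : EuclideanSpace ℝ (Fin 2)) : ‖sph x‖ = 1 := by
  have hD := Dpos ‖x‖
  have h2 := normsq2 x
  have key : sph x 0 ^ 2 + sph x 1 ^ 2 + sph x 2 ^ 2 = 1 ^ 2 := by
    show (2*(1-‖x‖)*(x 0)/(2*‖x‖^2-2*‖x‖+1))^2 + (2*(1-‖x‖)*(x 1)/(2*‖x‖^2-2*‖x‖+1))^2
      + ((2*‖x‖-1)/(2*‖x‖^2-2*‖x‖+1))^2 = 1^2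
    field_simp
    rw [div_eq_one_iff_eq (pow_pos (by nlinarith) 2).ne', h2]
    ring
  have h3 := normsq3 (sph x)
  nlinarith [norm_nonneg (sph x)]

lemma continuous_mk3 {α : Type*} [TopologicalSpace α] {f g h : α → ℝ}
    (hf : Continuous f) (hg : Continuous g) (hh : Continuous h) :
    Continuous fun a => mk3 (f a) (g a) (h a) := by
  apply ((EuclideanSpace.equiv (Fin 3) ℝ).symm.continuous).comp
  apply continuous_pi
  intro i
  fin_cases i <;> simpa

lemma continuous_sph : Continuous sph := by
  have hD : ∀ x : EuclideanSpace ℝ (Fin 2), (2*‖x‖^2-2*‖x‖+1) ≠ 0 :=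
    fun x => ne_of_gt (Dpos _)
  apply continuous_mk3
  · exact (by fun_prop : Continuous fun x : EuclideanSpace ℝ (Fin 2) =>
      2*(1-‖x‖)*((EuclideanSpace.proj (0 : Fin 2)) x)).div (by fun_prop) hD
  · exact (by fun_prop : Continuous fun x : EuclideanSpace ℝ (Fin 2) =>
      2*(1-‖x‖)*((EuclideanSpace.proj (1 : Fin 2)) x)).div (by fun_prop) hD
  · exact (by fun_prop : Continuous fun x : EuclideanSpace ℝ (Fin 2) =>
      2*‖x‖-1).div (by fun_prop) hD

lemma sph_boundary (x : EuclideanSpace ℝ (Fin 2)) (h : ‖x‖ = 1) : sph x = mk3 0 0 1 := by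
  ext i
  fin_cases i <;> simp [sph, mk3, h] <;> norm_num

lemma sph2_lt_one (x : EuclideanSpace ℝ (Fin 2)) (h : ‖x‖ < 1) : sph x 2 < 1 := by
  show (2*‖x‖-1)/(2*‖x‖^2-2*‖x‖+1) < 1
  rw [div_lt_one (Dpos _)]
  nlinarith [norm_nonneg x]

lemma sph_inj {x y : EuclideanSpace ℝ (Fin 2)} (hx : ‖x‖ < 1) (hy : ‖y‖ < 1)
    (h : sph x = sph y) : x = y := by
  set a := ‖x‖ with hadef
  set b := ‖y‖ with hbdef
  have ha0 : 0 ≤ a := norm_nonneg x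
  have hb0 : 0 ≤ b := norm_nonneg y
  have hDa := Dpos a
  have hDb := Dpos b
  have h2 : sph x 2 = sph y 2 := by rw [h]
  have hg : (2*a-1)/(2*a^2-2*a+1) = (2*b-1)/(2*b^2-2*b+1) := h2
  have hab : a = b := by
    rw [div_eq_div_iff (ne_of_gt hDa) (ne_of_gt hDb)] at hg
    have key : (a - b) * (a + b - 2*a*b) = 0 := by linear_combination hg / 2
    rcases mul_eq_zero.mp key with h' | h'
    · linarith
    · have hb' : 0 ≤ b * (1 - a) := mul_nonneg hb0 (by linarith)
      have ha1' : a * (1 - b) ≤ 0 := by nlinarith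
      have ha2' : 0 ≤ a * (1 - b) := mul_nonneg ha0 (by linarith)
      have ha0' : a * (1 - b) = 0 := le_antisymm ha1' ha2'
      rcases mul_eq_zero.mp ha0' with h'' | h''
      · have hbz : b * (1 - a) = 0 := by nlinarith
        rcases mul_eq_zero.mp hbz with h3 | h3
        · rw [h'', h3]
        · linarith
      · linarith
  have h0 : sph x 0 = sph y 0 := by rw [h]
  have h1 : sph x 1 = sph y 1 := by rw [h]
  have hc0 : 2*(1-a)*(x 0)/(2*a^2-2*a+1) = 2*(1-b)*(y 0)/(2*b^2-2*b+1) := h0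
  have hc1 : 2*(1-a)*(x 1)/(2*a^2-2*a+1) = 2*(1-b)*(y 1)/(2*b^2-2*b+1) := h1
  rw [← hab] at hc0 hc1
  have h1a : (0 : ℝ) < 1 - a := by linarith
  have hcancel : ∀ u v : ℝ, 2*(1-a)*u/(2*a^2-2*a+1) = 2*(1-a)*v/(2*a^2-2*a+1) → u = v := by
    intro u v huv
    rw [div_eq_div_iff (ne_of_gt hDa) (ne_of_gt hDa)] at huv
    have h2 := mul_right_cancel₀ (ne_of_gt hDa) huv
    exact mul_left_cancel₀ (by positivity) h2
  have hx0 : x 0 = y 0 := hcancel _ _ hc0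
  have hx1 : x 1 = y 1 := hcancel _ _ hc1
  ext i
  fin_cases i
  · exact hx0
  · exact hx1

/-- The full map: `sph` on the disc, vertical stick above the north pole outside. -/
noncomputable def Ff (n : ℕ) (x : EuclideanSpace ℝ (Fin 2)) : EuclideanSpace ℝ (Fin 3) :=
  if ‖x‖ ≤ 1 then sph x else mk3 0 0 ((‖x‖-1)^n + 1)

lemma continuous_Ff (n : ℕ) (hn : n ≠ 0) : Continuous (Ff n) := by
  apply Continuous.if_le continuous_sph _ continuous_norm continuous_const
  · intro x hx
    rw [sph_boundary x hx, hx]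
    simp [zero_pow hn]
  · exact continuous_mk3 continuous_const continuous_const (by fun_prop)

lemma Ff_of_ge (n : ℕ) (hn : n ≠ 0) (x : EuclideanSpace ℝ (Fin 2)) (h : 1 ≤ ‖x‖) :
    Ff n x = mk3 0 0 ((‖x‖-1)^n + 1) := by
  rcases eq_or_lt_of_le h with h1 | h1
  · rw [Ff, if_pos h1.ge, sph_boundary x h1.symm, ← h1]
    simp [zero_pow hn]
  · rw [Ff, if_neg (not_le.mpr h1)]

lemma Ff_of_lt (n : ℕ) (x : EuclideanSpace ℝ (Fin 2)) (h : ‖x‖ < 1) :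
    Ff n x = sph x := by rw [Ff, if_pos h.le]

lemma Ibar_eq (n : ℕ) (hn : n ≠ 0) (Kstar : ℝ) (hK : 0 < Kstar) :
    Ibar n Kstar = Metric.closedBall 0 (1 + Kstar) := by
  have hs : {x : EuclideanSpace ℝ (Fin 2) | Hflat n x < Kstar ^ n}
      = Metric.ball 0 (1 + Kstar) := by
    ext x
    simp only [Set.mem_setOf_eq, Hflat, mem_ball_zero_iff]
    rw [pow_lt_pow_iff_left₀ (le_max_left _ _) hK.le hn, max_lt_iff]
    constructor
    · rintro ⟨-, h⟩; linarith
    · intro h; exact ⟨hK, by linarith⟩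
  rw [Ibar, hs, closure_ball 0 (by positivity)]

lemma Ff_injective (n : ℕ) (hn : n ≠ 0) {x y : EuclideanSpace ℝ (Fin 2)}
    (h : Ff n x = Ff n y) :
    (‖x‖ < 1 ∧ x = y) ∨ (1 ≤ ‖x‖ ∧ 1 ≤ ‖y‖ ∧ ‖x‖ = ‖y‖) := by
  by_cases hx : ‖x‖ < 1 <;> by_cases hy : ‖y‖ < 1
  · left
    refine ⟨hx, sph_inj hx hy ?_⟩
    rwa [Ff_of_lt n x hx, Ff_of_lt n y hy] at h
  · exfalso
    rw [Ff_of_lt n x hx, Ff_of_ge n hn y (not_lt.mp hy)] at h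
    have h2 : sph x 2 = (‖y‖-1)^n + 1 := by rw [h]; rfl
    have := sph2_lt_one x hx
    have hp : (0:ℝ) ≤ (‖y‖-1)^n := pow_nonneg (by linarith [not_lt.mp hy]) n
    linarith
  · exfalso
    rw [Ff_of_lt n y hy, Ff_of_ge n hn x (not_lt.mp hx)] at h
    have h2 : (‖x‖-1)^n + 1 = sph y 2 := by rw [← h]; rfl
    have := sph2_lt_one y hy
    have hp : (0:ℝ) ≤ (‖x‖-1)^n := pow_nonneg (by linarith [not_lt.mp hx]) n
    linarith
  · right
    have hx' := not_lt.mp hx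
    have hy' := not_lt.mp hy
    refine ⟨hx', hy', ?_⟩
    rw [Ff_of_ge n hn x hx', Ff_of_ge n hn y hy'] at h
    have h2 : (‖x‖-1)^n + 1 = (‖y‖-1)^n + 1 := by
      have := congrArg (fun p : EuclideanSpace ℝ (Fin 3) => p 2) h
      simpa using this
    have h3 : (‖x‖-1)^n = (‖y‖-1)^n := by linarith
    have := pow_inj_nonneg n hn (by linarith : (0:ℝ) ≤ ‖x‖ - 1)
      (by linarith : (0:ℝ) ≤ ‖y‖ - 1) h3
    linarith

lemma Ff_mem (n : ℕ) (hn : n ≠ 0) (Kstar : ℝ) (hK : 0 < Kstar)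
    (x : EuclideanSpace ℝ (Fin 2)) (hx : x ∈ Ibar n Kstar) :
    ‖Ff n x‖ = 1 ∨ (Ff n x 0 = 0 ∧ Ff n x 1 = 0 ∧
      Ff n x 2 ∈ Set.Icc 1 (Kstar ^ n + 1)) := by
  have hxK : ‖x‖ ≤ 1 + Kstar := by
    rw [Ibar_eq n hn Kstar hK] at hx
    exact mem_closedBall_zero_iff.mp hx
  by_cases h : ‖x‖ ≤ 1
  · left
    rw [Ff, if_pos h]
    exact norm_sph x
  · right
    have h1 : 1 ≤ ‖x‖ := (not_le.mp h).le
    rw [Ff_of_ge n hn x h1]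
    refine ⟨rfl, rfl, ?_, ?_⟩
    · have : (0:ℝ) ≤ (‖x‖-1)^n := pow_nonneg (by linarith) n
      show (1:ℝ) ≤ (‖x‖-1)^n + 1
      linarith
    · show (‖x‖-1)^n + 1 ≤ Kstar ^ n + 1
      have : (‖x‖-1)^n ≤ Kstar ^ n :=
        pow_le_pow_left₀ (by linarith) (by linarith) n
      linarith

lemma Ff_surjective (n : ℕ) (hn : n ≠ 0) (Kstar : ℝ) (hK : 0 < Kstar)
    (p : EuclideanSpace ℝ (Fin 3))
    (hp : ‖p‖ = 1 ∨ (p 0 = 0 ∧ p 1 = 0 ∧ p 2 ∈ Set.Icc 1 (Kstar ^ n + 1))) :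
    ∃ x ∈ Ibar n Kstar, Ff n x = p := by
  have hIb := Ibar_eq n hn Kstar hK
  rcases hp with hp | ⟨hp0, hp1, hp2a, hp2b⟩
  · -- on the sphere
    have hsum : p 0 ^ 2 + p 1 ^ 2 + p 2 ^ 2 = 1 := by
      rw [normsq3 p, hp, one_pow]
    have hg : ContinuousOn (fun r : ℝ => (2*r-1)/(2*r^2-2*r+1)) (Set.Icc 0 1) :=
      (Continuous.div (by fun_prop) (by fun_prop) fun r => ne_of_gt (Dpos r)).continuousOn
    have hIVT := intermediate_value_Icc (zero_le_one) hg
    have hmem : p 2 ∈ Set.Icc ((fun r : ℝ => (2*r-1)/(2*r^2-2*r+1)) 0)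
        ((fun r : ℝ => (2*r-1)/(2*r^2-2*r+1)) 1) := by
      simp only
      norm_num
      constructor <;> nlinarith
    obtain ⟨r, hr, hgr⟩ := hIVT hmem
    simp only at hgr
    rcases lt_or_eq_of_le hr.2 with h1 | h1
    · -- r < 1
      have hDr := Dpos r
      have h1r : (0:ℝ) < 1 - r := by linarith
      set x := mk2 (p 0 * (2*r^2-2*r+1)/(2*(1-r))) (p 1 * (2*r^2-2*r+1)/(2*(1-r))) with hxdef
      have hgr' : 2*r - 1 = p 2 * (2*r^2-2*r+1) := by
        rw [div_eq_iff (ne_of_gt hDr)] at hgr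
        linarith [hgr]
      have hxsq : x 0 ^ 2 + x 1 ^ 2 = r ^ 2 := by
        rw [hxdef]
        simp only [mk2_apply0, mk2_apply1]
        have e1 : p 0 ^ 2 + p 1 ^ 2 = 1 - p 2 ^ 2 := by linarith
        field_simp
        nlinarith [e1, hgr', sq_nonneg (2*r^2-2*r+1)]
      have hxn : ‖x‖ = r := norm_eq_of_sq2 x r hr.1 hxsq
      refine ⟨x, ?_, ?_⟩
      · rw [hIb, mem_closedBall_zero_iff, hxn]; linarith
      · rw [Ff, if_pos (by rw [hxn]; linarith)]
        ext i
        fin_cases i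
        · show 2*(1-‖x‖)*(x 0)/(2*‖x‖^2-2*‖x‖+1) = p 0
          rw [hxn, hxdef]
          simp only [mk2_apply0]
          field_simp
          exact mul_div_cancel_right₀ _ (by nlinarith)
        · show 2*(1-‖x‖)*(x 1)/(2*‖x‖^2-2*‖x‖+1) = p 1
          rw [hxn, hxdef]
          simp only [mk2_apply1]
          field_simp
          exact mul_div_cancel_right₀ _ (by nlinarith)
        · show (2*‖x‖-1)/(2*‖x‖^2-2*‖x‖+1) = p 2
          rw [hxn]
          exact hgr
    · -- r = 1 : north pole
      rw [h1] at hgr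
      have hp2 : p 2 = 1 := by
        rw [← hgr]; norm_num
      have hp0 : p 0 = 0 := by nlinarith
      have hp1 : p 1 = 0 := by nlinarith
      refine ⟨mk2 1 0, ?_, ?_⟩
      · rw [hIb, mem_closedBall_zero_iff,
          norm_eq_of_sq2 (mk2 1 0) 1 zero_le_one (by norm_num)]
        linarith
      · have hn1 : ‖mk2 (1:ℝ) 0‖ = 1 := norm_eq_of_sq2 _ 1 zero_le_one (by norm_num)
        rw [Ff, if_pos hn1.le, sph_boundary _ hn1]
        ext i
        fin_cases i
        · simpa using hp0.symm
        · simpa using hp1.symm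
        · simpa using hp2.symm
  · -- on the stick
    have hIVT := intermediate_value_Icc hK.le
      ((continuous_pow n).continuousOn : ContinuousOn (fun t : ℝ => t ^ n) (Set.Icc 0 Kstar))
    have hmem : p 2 - 1 ∈ Set.Icc ((0:ℝ) ^ n) (Kstar ^ n) := by
      rw [zero_pow hn]
      exact ⟨by linarith, by linarith⟩
    obtain ⟨t, ht, htn⟩ := hIVT hmem
    simp only at htn
    set x := mk2 (1 + t) 0 with hxdef
    have hxn : ‖x‖ = 1 + t := by
      apply norm_eq_of_sq2 x (1 + t) (by linarith [ht.1])
      rw [hxdef]; simp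
    refine ⟨x, ?_, ?_⟩
    · rw [hIb, mem_closedBall_zero_iff, hxn]; linarith [ht.2]
    · rw [Ff_of_ge n hn x (by rw [hxn]; linarith [ht.1]), hxn]
      ext i
      fin_cases i
      · simpa using hp0.symm
      · simpa using hp1.symm
      · show (1 + t - 1)^n + 1 = p 2
        have : (1 + t - 1 : ℝ) = t := by ring
        rw [this, htn]
        ring

noncomputable def Fsub (n : ℕ) (hn : n ≠ 0) (Kstar : ℝ) (hK : 0 < Kstar)
    (x : Ibar n Kstar) :
    {p : EuclideanSpace ℝ (Fin 3) //
      ‖p‖ = 1 ∨ (p 0 = 0 ∧ p 1 = 0 ∧ p 2 ∈ Set.Icc 1 (Kstar ^ n + 1))} :=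
  ⟨Ff n x, Ff_mem n hn Kstar hK x x.2⟩

theorem stmt16 (n : ℕ) (hn : 2 < n) (Kstar : ℝ) (hK : 0 < Kstar) :
    Nonempty (Quot (rel n Kstar) ≃ₜ
      {p : EuclideanSpace ℝ (Fin 3) //
        ‖p‖ = 1 ∨ (p 0 = 0 ∧ p 1 = 0 ∧ p 2 ∈ Set.Icc 1 (Kstar ^ n + 1))}) := by
  have hn0 : n ≠ 0 := by omega
  have hIb := Ibar_eq n hn0 Kstar hK
  haveI : CompactSpace (Ibar n Kstar) := by
    apply isCompact_iff_compactSpace.mp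
    rw [hIb]
    exact isCompact_closedBall 0 _
  have hresp : ∀ a b : Ibar n Kstar, rel n Kstar a b →
      Fsub n hn0 Kstar hK a = Fsub n hn0 Kstar hK b := by
    rintro a b (⟨-, rfl⟩ | ⟨h1, h2, h3⟩)
    · rfl
    · apply Subtype.ext
      show Ff n (a : EuclideanSpace ℝ (Fin 2)) = Ff n (b : EuclideanSpace ℝ (Fin 2))
      rw [Ff_of_ge n hn0 _ h1, Ff_of_ge n hn0 _ h2, h3]
  have hcont : Continuous (Quot.lift (Fsub n hn0 Kstar hK) hresp) :=
    continuous_quot_lift _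
      (Continuous.subtype_mk ((continuous_Ff n hn0).comp continuous_subtype_val) _)
  have hinj : Function.Injective (Quot.lift (Fsub n hn0 Kstar hK) hresp) := by
    intro a b
    refine Quot.induction_on₂ a b ?_
    intro x y h
    have h' : Ff n (x : EuclideanSpace ℝ (Fin 2)) = Ff n (y : EuclideanSpace ℝ (Fin 2)) :=
      congrArg Subtype.val h
    apply Quot.sound
    rcases Ff_injective n hn0 h' with ⟨hlt, hxy⟩ | hge
    · exact Or.inl ⟨hlt, Subtype.ext hxy⟩
    · exact Or.inr hge
  have hsurj : Function.Surjective (Quot.lift (Fsub n hn0 Kstar hK) hresp) := by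
    rintro ⟨p, hp⟩
    obtain ⟨x, hxI, hxp⟩ := Ff_surjective n hn0 Kstar hK p hp
    exact ⟨Quot.mk _ ⟨x, hxI⟩, Subtype.ext hxp⟩
  exact ⟨Continuous.homeoOfEquivCompactToT2
    (f := Equiv.ofBijective _ ⟨hinj, hsurj⟩) hcont⟩
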